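/- (Lemma 5.1) For any σ ∈ ℂ, the linear map ρ_σ : Vir → HVir defined by ρ_σ(L̄(n)) = L(n) + σ n I(n) + δ_{n,0}(σ C_VH − (σ²/2) C_Hei) and ρ_σ(C̄_Vir) = C_Vir + 24σ C_VH − 12σ² C_Hei is an injective homomorphism of Lie algebras. -/

import Mathlib

noncomputable section

/-- Basis of the twisted Virasoro–Heisenberg algebra:
`L(n)`, `I(n)` (`n ∈ ℤ`) and the central elements `C_Hei`, `C_VH`, `C_Vir`. -/
inductive HVB : Type
  | L : ℤ → HVB
  | I : ℤ → HVB
  | CH : HVB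
  | CVH : HVB
  | CV : HVB

/-- The underlying vector space of the twisted Virasoro–Heisenberg algebra. -/
abbrev HVir := HVB →₀ ℂ

/-- The structure constants of the twisted Virasoro–Heisenberg algebra:
`[L(n),L(m)] = (n−m)L(n+m) + ((n³−n)/12)δ_{n,−m}C_Vir`,
`[I(n),I(m)] = n δ_{n,−m} C_Hei`,
`[L(n),I(m)] = −m I(n+m) − (n²+n)δ_{n,−m}C_VH`,
with `C_Hei`, `C_VH`, `C_Vir` central. -/
def hvSC : HVB → HVB → HVir
  | .L n, .L m =>
      ((n : ℂ) - (m : ℂ)) • Finsupp.single (HVB.L (n + m)) 1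
        + (if n + m = 0 then ((n : ℂ) ^ 3 - n) / 12 else 0) • Finsupp.single HVB.CV 1
  | .L n, .I m =>
      (-(m : ℂ)) • Finsupp.single (HVB.I (n + m)) 1
        + (if n + m = 0 then -((n : ℂ) ^ 2 + n) else 0) • Finsupp.single HVB.CVH 1
  | .I n, .L m =>
      (n : ℂ) • Finsupp.single (HVB.I (n + m)) 1
        + (if n + m = 0 then ((m : ℂ) ^ 2 + m) else 0) • Finsupp.single HVB.CVH 1
  | .I n, .I m =>
      (if n + m = 0 then (n : ℂ) else 0) • Finsupp.single HVB.CH 1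
  | _, _ => 0

/-- The bracket of the twisted Virasoro–Heisenberg algebra: the bilinear extension of the
structure constants `hvSC`. -/
def hvBr (x y : HVir) : HVir :=
  x.sum fun a s => y.sum fun b t => (s * t) • hvSC a b

/-- Basis of the Virasoro algebra: `L̄(n)` (`n ∈ ℤ`) and the central element `C̄_Vir`. -/
inductive VB : Type
  | L : ℤ → VB
  | C : VB

/-- The underlying vector space of the Virasoro algebra. -/
abbrev Vira := VB →₀ ℂ

/-- The structure constants of the Virasoro algebra:
`[L̄(n),L̄(m)] = (n−m)L̄(n+m) + ((n³−n)/12)δ_{n,−m}C̄_Vir`, with `C̄_Vir` central. -/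
def vSC : VB → VB → Vira
  | .L n, .L m =>
      ((n : ℂ) - (m : ℂ)) • Finsupp.single (VB.L (n + m)) 1
        + (if n + m = 0 then ((n : ℂ) ^ 3 - n) / 12 else 0) • Finsupp.single VB.C 1
  | _, _ => 0

/-- The bracket of the Virasoro algebra: the bilinear extension of `vSC`. -/
def vBr (x y : Vira) : Vira :=
  x.sum fun a s => y.sum fun b t => (s * t) • vSC a b

/-- The images of the basis elements of the Virasoro algebra under the map `ρ_σ`:
`ρ_σ(L̄(n)) = L(n) + σ n I(n) + δ_{n,0}(σ C_VH − (σ²/2) C_Hei)` and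
`ρ_σ(C̄_Vir) = C_Vir + 24σ C_VH − 12σ² C_Hei`. -/
def rhoImg (σ : ℂ) : VB → HVir
  | .L n =>
      Finsupp.single (HVB.L n) 1 + (σ * n) • Finsupp.single (HVB.I n) 1
        + (if n = 0 then σ • Finsupp.single HVB.CVH 1
            - (σ ^ 2 / 2) • Finsupp.single HVB.CH 1 else 0)
  | .C =>
      Finsupp.single HVB.CV 1 + (24 * σ) • Finsupp.single HVB.CVH 1
        - (12 * σ ^ 2) • Finsupp.single HVB.CH 1

/-- The linear map `ρ_σ : Vir → HVir`. -/
def rho (σ : ℂ) : Vira →ₗ[ℂ] HVir :=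
  Finsupp.lsum ℂ fun b => LinearMap.toSpanSingleton ℂ HVir (rhoImg σ b)

open Finsupp LinearMap in
def hvB : HVir →ₗ[ℂ] HVir →ₗ[ℂ] HVir :=
  Finsupp.lsum ℂ fun a => LinearMap.toSpanSingleton ℂ (HVir →ₗ[ℂ] HVir)
    (Finsupp.lsum ℂ fun b => LinearMap.toSpanSingleton ℂ HVir (hvSC a b))

lemma hvBr_eq (x y : HVir) : hvBr x y = hvB x y := by
  unfold hvBr hvB
  rw [Finsupp.lsum_apply]
  simp only [Finsupp.sum]
  rw [LinearMap.coe_sum, Finset.sum_apply]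
  refine Finset.sum_congr rfl fun a _ => ?_
  simp only [LinearMap.toSpanSingleton_apply, LinearMap.smul_apply, Finsupp.lsum_apply,
    Finsupp.sum, Finset.smul_sum, LinearMap.toSpanSingleton_apply, smul_smul]

def vB : Vira →ₗ[ℂ] Vira →ₗ[ℂ] Vira :=
  Finsupp.lsum ℂ fun a => LinearMap.toSpanSingleton ℂ (Vira →ₗ[ℂ] Vira)
    (Finsupp.lsum ℂ fun b => LinearMap.toSpanSingleton ℂ Vira (vSC a b))

lemma vBr_eq (x y : Vira) : vBr x y = vB x y := by
  unfold vBr vB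
  rw [Finsupp.lsum_apply]
  simp only [Finsupp.sum]
  rw [LinearMap.coe_sum, Finset.sum_apply]
  refine Finset.sum_congr rfl fun a _ => ?_
  simp only [LinearMap.toSpanSingleton_apply, LinearMap.smul_apply, Finsupp.lsum_apply,
    Finsupp.sum, Finset.smul_sum, LinearMap.toSpanSingleton_apply, smul_smul]

lemma hvB_single (a b : HVB) : hvB (Finsupp.single a 1) (Finsupp.single b 1) = hvSC a b := by
  simp [hvB, Finsupp.lsum_single]

lemma vB_single (a b : VB) : vB (Finsupp.single a 1) (Finsupp.single b 1) = vSC a b := by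
  simp [vB, Finsupp.lsum_single]

lemma rho_single (σ : ℂ) (a : VB) : rho σ (Finsupp.single a 1) = rhoImg σ a := by
  simp [rho]

-- injectivity
def piInv : HVB → Vira
  | .L n => Finsupp.single (VB.L n) 1
  | .CV => Finsupp.single VB.C 1
  | _ => 0

def piMap : HVir →ₗ[ℂ] Vira :=
  Finsupp.lsum ℂ fun b => LinearMap.toSpanSingleton ℂ Vira (piInv b)

lemma piMap_single (b : HVB) (t : ℂ) : piMap (Finsupp.single b t) = t • piInv b := by
  simp [piMap]

@[simp] lemma piInv_L (n : ℤ) : piInv (HVB.L n) = Finsupp.single (VB.L n) 1 := rfl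
@[simp] lemma piInv_I (n : ℤ) : piInv (HVB.I n) = 0 := rfl
@[simp] lemma piInv_CH : piInv HVB.CH = 0 := rfl
@[simp] lemma piInv_CVH : piInv HVB.CVH = 0 := rfl
@[simp] lemma piInv_CV : piInv HVB.CV = Finsupp.single VB.C 1 := rfl

lemma rho_single' (σ : ℂ) (a : VB) (s : ℂ) :
    rho σ (Finsupp.single a s) = s • rhoImg σ a := by
  simp [rho]

lemma pi_rhoImg (σ : ℂ) (a : VB) : piMap (rhoImg σ a) = Finsupp.single a 1 := by
  cases a with
  | L n =>
    rcases eq_or_ne n 0 with rfl | h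
    · simp only [rhoImg, if_pos rfl, map_add, map_sub, map_smul, piMap_single,
        piInv_L, piInv_I, piInv_CH, piInv_CVH]
      simp [piMap_single]
    · simp only [rhoImg, if_neg h, map_add, map_zero, map_smul, piMap_single,
        piInv_L, piInv_I]
      simp
  | C =>
    simp only [rhoImg, map_sub, map_add, map_smul, piMap_single,
      piInv_CV, piInv_CVH, piInv_CH]
    simp

lemma pi_rho (σ : ℂ) : ∀ x, piMap (rho σ x) = x := by
  intro x
  induction x using Finsupp.induction_linear with
  | zero => simp
  | add f g hf hg => rw [map_add, map_add, hf, hg]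
  | single a s =>
    rw [rho_single', map_smul, pi_rhoImg, Finsupp.smul_single, smul_eq_mul, mul_one]

-- central vanishing
lemma hvSC_CH_left (b : HVB) : hvSC .CH b = 0 := by cases b <;> rfl
lemma hvSC_CVH_left (b : HVB) : hvSC .CVH b = 0 := by cases b <;> rfl
lemma hvSC_CV_left (b : HVB) : hvSC .CV b = 0 := by cases b <;> rfl
lemma hvSC_CH_right (a : HVB) : hvSC a .CH = 0 := by cases a <;> rfl
lemma hvSC_CVH_right (a : HVB) : hvSC a .CVH = 0 := by cases a <;> rfl
lemma hvSC_CV_right (a : HVB) : hvSC a .CV = 0 := by cases a <;> rfl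

lemma hvB_left_zero (a : HVB) (h : ∀ b, hvSC a b = 0) (s : ℂ) :
    hvB (Finsupp.single a s) = 0 := by
  ext y
  simp [hvB, Finsupp.lsum_single, h]

lemma hvB_right_zero (b : HVB) (h : ∀ a, hvSC a b = 0) (t : ℂ) (x : HVir) :
    hvB x (Finsupp.single b t) = 0 := by
  rw [← hvBr_eq]
  unfold hvBr
  refine Finset.sum_eq_zero fun a _ => ?_
  dsimp only
  rw [Finsupp.sum_single_index] <;> simp [h]

lemma hvB_rhoImgC_left (σ : ℂ) : hvB (rhoImg σ VB.C) = 0 := by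
  simp only [rhoImg, map_sub, map_add, map_smul,
    hvB_left_zero _ hvSC_CV_left, hvB_left_zero _ hvSC_CVH_left,
    hvB_left_zero _ hvSC_CH_left]
  simp

lemma hvB_rhoImgC_right (σ : ℂ) (x : HVir) : hvB x (rhoImg σ VB.C) = 0 := by
  simp only [rhoImg, map_sub, map_add, map_smul,
    hvB_right_zero _ hvSC_CV_right, hvB_right_zero _ hvSC_CVH_right,
    hvB_right_zero _ hvSC_CH_right]
  simp

lemma hvB_c_left (σ : ℂ) (n : ℤ) :
    hvB (if n = 0 then σ • Finsupp.single HVB.CVH 1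
        - (σ ^ 2 / 2) • Finsupp.single HVB.CH 1 else 0) = 0 := by
  split_ifs
  · simp only [map_sub, map_smul, hvB_left_zero _ hvSC_CVH_left,
      hvB_left_zero _ hvSC_CH_left]
    simp
  · exact map_zero hvB

lemma hvB_c_right (σ : ℂ) (n : ℤ) (x : HVir) :
    hvB x (if n = 0 then σ • Finsupp.single HVB.CVH 1
        - (σ ^ 2 / 2) • Finsupp.single HVB.CH 1 else 0) = 0 := by
  split_ifs
  · simp only [map_sub, map_smul, hvB_right_zero _ hvSC_CVH_right,
      hvB_right_zero _ hvSC_CH_right]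
    simp
  · exact map_zero (hvB x)

lemma key (σ : ℂ) (a b : VB) : rho σ (vSC a b) = hvB (rhoImg σ a) (rhoImg σ b) := by
  cases a with
  | C =>
    rw [show vSC VB.C b = 0 from by cases b <;> rfl, map_zero, hvB_rhoImgC_left]
    rfl
  | L n =>
    cases b with
    | C =>
      rw [show vSC (VB.L n) VB.C = 0 from rfl, map_zero, hvB_rhoImgC_right]
    | L m =>
      have rhs : hvB (rhoImg σ (VB.L n)) (rhoImg σ (VB.L m)) =
          hvSC (.L n) (.L m) + (σ * m) • hvSC (.L n) (.I m)
            + (σ * n) • hvSC (.I n) (.L m)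
            + ((σ * n) * (σ * m)) • hvSC (.I n) (.I m) := by
        simp only [rhoImg, map_add, map_smul, LinearMap.add_apply, LinearMap.smul_apply,
          hvB_c_left, hvB_c_right, hvB_single, LinearMap.zero_apply, smul_zero,
          add_zero, LinearMap.zero_apply, smul_smul]
        module
      have lhs : rho σ (vSC (VB.L n) (VB.L m)) =
          ((n : ℂ) - m) • rhoImg σ (VB.L (n + m))
            + (if n + m = 0 then ((n : ℂ) ^ 3 - n) / 12 else 0) • rhoImg σ VB.C := by
        simp only [vSC, map_add, map_smul, rho_single]
      rw [lhs, rhs]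
      by_cases h : n + m = 0
      · obtain rfl : m = -n := by omega
        simp only [hvSC, rhoImg, add_neg_cancel, if_pos rfl, neg_neg]
        push_cast
        module
      · simp only [hvSC, rhoImg, if_neg h, if_neg (by omega : ¬ n + m = 0)]
        push_cast
        module

lemma main_hom (σ : ℂ) (x y : Vira) : rho σ (vB x y) = hvB (rho σ x) (rho σ y) := by
  induction x using Finsupp.induction_linear with
  | zero => simp
  | add f g hf hg => simp only [map_add, LinearMap.add_apply, hf, hg]
  | single a s =>
    induction y using Finsupp.induction_linear with
    | zero => simp
    | add f g hf hg => simp only [map_add, hf, hg]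
    | single b t =>
      rw [show (Finsupp.single a s : Vira) = s • Finsupp.single a 1 by
            simp [Finsupp.smul_single],
          show (Finsupp.single b t : Vira) = t • Finsupp.single b 1 by
            simp [Finsupp.smul_single]]
      simp only [map_smul, LinearMap.smul_apply, vB_single, rho_single, key]

/-- Lemma 5.1. For any `σ ∈ ℂ`, the linear map `ρ_σ : Vir → HVir`
defined by `ρ_σ(L̄(n)) = L(n) + σ n I(n) + δ_{n,0}(σ C_VH − (σ²/2) C_Hei)` and
`ρ_σ(C̄_Vir) = C_Vir + 24σ C_VH − 12σ² C_Hei` is an injective homomorphism of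
Lie algebras. -/
theorem statement12 (σ : ℂ) :
    Function.Injective (rho σ) ∧
    (∀ x y : Vira, rho σ (vBr x y) = hvBr (rho σ x) (rho σ y)) := by
  refine ⟨Function.LeftInverse.injective (pi_rho σ), fun x y => ?_⟩
  rw [vBr_eq, hvBr_eq]
  exact main_hom σ x y
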